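/- arXiv:2006.09908 — 10 statements merged into one kernel-verified Lean document; each statement's English description precedes it below -/
import Mathlib

section
/- Let n and k be integers with n ≥ 7 and 1 ≤ k ≤ n/2. Then the polynomial P(z) = z^k + z^{n-k} - z^n has a root in ℂ that is not real (i.e., there exists z ∈ ℂ with z^k + z^{n-k} - z^n = 0 and Im z ≠ 0). Consequently, not all roots of the two-terminal reliability of a cycle of order n ≥ 7 are real. -/
/-!
Write `z^k + z^(n-k) - z^n = -z^k (z^d - z^m - 1)` with `d = n - k > m = n - 2k`. If the monic
`q = X^d - X^m - 1` had only real roots `r`, then `|i - r|^2 = 1 + r^2 ≥ 2|r|` would give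
`|q(i)|^2 ≥ 2^d |q(0)| ≥ 2^d ≥ 16`, whereas `|q(i)| ≤ 3` by the triangle inequality.
-/

open Polynomial Complex

theorem norm_multiset_prod {α : Type*} [SeminormedCommRing α] [NormMulClass α] [NormOneClass α]
    (s : Multiset α) : ‖s.prod‖ = (s.map (‖·‖)).prod :=
  map_multiset_prod normHom s

theorem two_mul_norm_le_norm_I_sub_sq {r : ℂ} (hr : r.im = 0) : 2 * ‖r‖ ≤ ‖I - r‖ ^ 2 := by
  rw [Complex.sq_norm, Complex.normSq_apply, ← abs_re_eq_norm.mpr hr]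
  simp only [sub_re, I_re, sub_im, I_im, hr]
  nlinarith [sq_nonneg (|r.re| - 1), sq_abs r.re]

theorem two_pow_card_mul_prod_norm_le {s : Multiset ℂ} (hs : ∀ r ∈ s, r.im = 0) :
    2 ^ Multiset.card s * (s.map (‖·‖)).prod ≤ (s.map fun r => ‖I - r‖ ^ 2).prod := by
  rw [← Multiset.prod_replicate, ← Multiset.map_const', ← Multiset.prod_map_mul]
  exact Multiset.prod_map_le_prod_map₀ _ _ (fun _ _ => by positivity)
    fun r hr => two_mul_norm_le_norm_I_sub_sq (hs r hr)

theorem two_pow_natDegree_mul_norm_eval_zero_le {p : ℂ[X]} (hp : ∀ r ∈ p.roots, r.im = 0) :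
    2 ^ p.natDegree * (‖p.leadingCoeff‖ * ‖p.eval 0‖) ≤ ‖p.eval I‖ ^ 2 := by
  have hsplit := IsAlgClosed.splits p
  have hroots := two_pow_card_mul_prod_norm_le hp
  rw [hsplit.natDegree_eq_card_roots, hsplit.eval_eq_prod_roots, hsplit.eval_eq_prod_roots,
    norm_mul, norm_mul, norm_multiset_prod, norm_multiset_prod, Multiset.map_map,
    Multiset.map_map]
  simp only [Function.comp_def, zero_sub, norm_neg]
  rw [mul_pow, ← Multiset.prod_map_pow]
  calc _ = ‖p.leadingCoeff‖ ^ 2 * (2 ^ p.roots.card * (p.roots.map (‖·‖)).prod) := by ring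
    _ ≤ _ := by gcongr

theorem exists_nonreal_root_X_pow_sub_X_pow_sub_one {m d : ℕ} (hmd : m < d) (hd : 4 ≤ d) :
    ∃ z : ℂ, z ^ d - (z ^ m + 1) = 0 ∧ z.im ≠ 0 := by
  by_contra! hreal
  set q : ℂ[X] := X ^ d - (X ^ m + 1)
  have hlt : (X ^ m + 1 : ℂ[X]).degree < (X ^ d : ℂ[X]).degree := by
    rw [degree_X_pow]; compute_degree; exact WithBot.coe_lt_coe.mpr hmd
  have hmonic : q.Monic := (monic_X_pow d).sub_of_left hlt
  have hdeg : q.natDegree = d :=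
    natDegree_eq_of_degree_eq_some ((degree_sub_eq_left_of_degree_lt hlt).trans (degree_X_pow d))
  have hroots : ∀ r ∈ q.roots, r.im = 0 := fun r hr =>
    hreal r (by simpa [q] using (mem_roots hmonic.ne_zero).mp hr)
  have hzero : 1 ≤ ‖q.eval 0‖ := by
    rcases m with _ | m <;> norm_num [q, zero_pow (by omega : d ≠ 0)]
  have hI : ‖q.eval I‖ ≤ 3 := by
    calc ‖q.eval I‖ ≤ ‖I ^ d‖ + (‖I ^ m‖ + ‖(1 : ℂ)‖) := by
          simp only [q, eval_sub, eval_add, eval_pow, eval_X, eval_one]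
          exact (norm_sub_le _ _).trans (by gcongr; exact norm_add_le _ _)
      _ = 3 := by norm_num
  have hbound := two_pow_natDegree_mul_norm_eval_zero_le hroots
  rw [hdeg, hmonic.leadingCoeff, norm_one, one_mul] at hbound
  have h16 : (16 : ℝ) ≤ 2 ^ d := by
    calc (16 : ℝ) = 2 ^ 4 := by norm_num
      _ ≤ 2 ^ d := pow_le_pow_right₀ (by norm_num) hd
  nlinarith [norm_nonneg (q.eval I)]

/-- For integers `n ≥ 7` and `1 ≤ k ≤ n/2`, the polynomial
`z^k + z^(n-k) - z^n` has a non-real complex root. Hence not all roots of the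
two-terminal reliability of a cycle of order `n ≥ 7` are real. -/
theorem cycle_two_terminal_has_nonreal_root (n k : ℕ) (hn : 7 ≤ n)
    (hk : 1 ≤ k) (hkn : 2 * k ≤ n) :
    ∃ z : ℂ, z ^ k + z ^ (n - k) - z ^ n = 0 ∧ z.im ≠ 0 := by
  obtain ⟨z, hz, him⟩ :=
    exists_nonreal_root_X_pow_sub_X_pow_sub_one (m := n - 2 * k) (d := n - k) (by omega) (by omega)
  have hmid : z ^ (n - k) = z ^ k * z ^ (n - 2 * k) := by rw [← pow_add]; congr 1; omega
  have htop : z ^ n = z ^ k * z ^ (n - k) := by rw [← pow_add]; congr 1; omega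
  exact ⟨z, by linear_combination (-z ^ k) * hz + hmid - htop, him⟩
end

section
/- Let ε > 0, let l ≥ 2 be an even integer with (1 + ε)^l > 2, and let k ≥ 2 be an even integer. Then the polynomial f(p) = 1 - (1 - p^l)^k has a real root x with -1 - ε < x < -1. -/
/-!
The root is `x = -2^(1/l)`. As `l` is even, `x ^ l = 2`, so `(1 - x ^ l) ^ k = (-1) ^ k = 1`
because `k` is even. Comparing `l`-th powers in `1 < 2 < (1 + ε) ^ l` gives
`1 < 2^(1/l) < 1 + ε`.
-/

lemma one_sub_one_sub_pow_eq_zero_of_pow_eq_two {R : Type*} [Ring R] {x : R} {l k : ℕ}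
    (hx : x ^ l = 2) (hk : Even k) : 1 - (1 - x ^ l) ^ k = 0 := by
  rw [hx]
  norm_num [hk.neg_one_pow]

theorem theta_graph_root_left_of_neg_one_general (ε : ℝ) (hε : 0 < ε)
    (l k : ℕ) (hl2 : 2 ≤ l) (hl : Even l) (hlε : 2 < (1 + ε) ^ l)
    (hke : Even k) :
    ∃ x : ℝ, 1 - (1 - x ^ l) ^ k = 0 ∧ -1 - ε < x ∧ x < -1 := by
  set y : ℝ := 2 ^ ((l : ℝ)⁻¹)
  have hy : y ^ l = 2 := Real.rpow_inv_natCast_pow zero_le_two (by omega)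
  have hy_nonneg : 0 ≤ y := by positivity
  have one_lt_y : 1 < y := lt_of_pow_lt_pow_left₀ l hy_nonneg (by rw [one_pow, hy]; norm_num)
  have y_lt : y < 1 + ε := lt_of_pow_lt_pow_left₀ l (by linarith) (hy ▸ hlε)
  exact ⟨-y, one_sub_one_sub_pow_eq_zero_of_pow_eq_two (by rw [hl.neg_pow, hy]) hke,
    by linarith, by linarith⟩

/-- Let `ε > 0`, let `l ≥ 2` be an even integer with `(1 + ε)^l > 2`, and let
`k ≥ 2` be an even integer. Then `1 - (1 - p^l)^k` has a real root strictly
between `-1 - ε` and `-1`. -/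
theorem theta_graph_root_left_of_neg_one (ε : ℝ) (hε : 0 < ε)
    (l k : ℕ) (hl2 : 2 ≤ l) (hl : Even l) (hlε : 2 < (1 + ε) ^ l)
    (hk2 : 2 ≤ k) (hke : Even k) :
    ∃ x : ℝ, 1 - (1 - x ^ l) ^ k = 0 ∧ -1 - ε < x ∧ x < -1 :=
  theta_graph_root_left_of_neg_one_general ε hε l k hl2 hl hlε hke
end

section
/- Let f : ℝ → ℝ be given by f(x) = 2x² - x⁴. For every ε > 0 there exist a positive integer n and a real number x with f^[n](x) = 0 (the n-fold iterate of f at x is zero) and |x + (1 + √5)/2| < ε. That is, the closure of the union over all n ≥ 1 of the real roots of the n-fold iterates of f contains -(1+√5)/2, the negative of the golden ratio. -/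
/-!
The point `-φ` is a fixed point of `f x = 2x² - x⁴` with derivative `4φ² > 4`, so it is
repelling: just to the right of it, `f` maps `[-φ, -φ + d]` onto a set containing
`[-φ, -φ + 4d]`. By the intermediate value theorem, any `t` slightly to the right of `-φ`
therefore has, for every `n`, a preimage under `f^[n]` within `4⁻ⁿ (t + φ)` of `-φ`.
Applied to the root `t = -√2` of `f`, these preimages are roots of `f^[n+1]` accumulating
at `-φ`.
-/

open Set Filter Topology Real goldenRatio

section Expanding

variable {f : ℝ → ℝ} {a δ k : ℝ}

theorem exists_mem_Icc_apply_eq_of_expanding (hf : Continuous f) (hk : 1 ≤ k) (hfa : f a = a)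
    (hexp : ∀ d ∈ Icc 0 δ, a + k * d ≤ f (a + d)) {s : ℝ} (hs : s ∈ Icc a (a + δ)) :
    ∃ y ∈ Icc a (a + (s - a) / k), f y = s := by
  have hsa : 0 ≤ s - a := sub_nonneg.2 hs.1
  have hd : (s - a) / k ∈ Icc 0 δ :=
    ⟨div_nonneg hsa (by linarith), (div_le_self hsa hk).trans (by linarith [hs.2])⟩
  have hcover : a + (s - a) ≤ f (a + (s - a) / k) := by
    simpa [mul_div_cancel₀ _ (by linarith : k ≠ 0)] using hexp _ hd
  exact intermediate_value_Icc (by linarith [hd.1]) hf.continuousOn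
    ⟨by rw [hfa]; exact hs.1, by linarith⟩

theorem exists_mem_Icc_iterate_eq_of_expanding (hf : Continuous f) (hk : 1 ≤ k) (hfa : f a = a)
    (hexp : ∀ d ∈ Icc 0 δ, a + k * d ≤ f (a + d)) {t : ℝ} (ht : t ∈ Icc a (a + δ)) (n : ℕ) :
    ∃ x ∈ Icc a (a + (t - a) / k ^ n), f^[n] x = t := by
  induction n with
  | zero => exact ⟨t, by simpa using ht.1, rfl⟩
  | succ n ih =>
    obtain ⟨x, hx, hfx⟩ := ih
    have hxa : x - a ≤ (t - a) / k ^ n := by linarith [hx.2]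
    have hxδ : x ∈ Icc a (a + δ) :=
      ⟨hx.1, by linarith [div_le_self (sub_nonneg.2 ht.1) (one_le_pow₀ hk (n := n)), ht.2]⟩
    obtain ⟨y, hy, hfy⟩ := exists_mem_Icc_apply_eq_of_expanding hf hk hfa hexp hxδ
    refine ⟨y, ⟨hy.1, hy.2.trans ?_⟩, by rw [Function.iterate_succ_apply, hfy, hfx]⟩
    rw [pow_succ, ← div_div]
    gcongr

theorem mem_closure_iterate_preimage_of_expanding (hf : Continuous f) (hk : 1 < k)
    (hfa : f a = a) (hexp : ∀ d ∈ Icc 0 δ, a + k * d ≤ f (a + d)) {t : ℝ}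
    (ht : t ∈ Icc a (a + δ)) : a ∈ closure {x | ∃ n, f^[n] x = t} := by
  refine Metric.mem_closure_iff.2 fun ε hε => ?_
  have hsmall : ∀ᶠ n in atTop, (t - a) / k ^ n < ε :=
    (tendsto_const_nhds.div_atTop (tendsto_pow_atTop_atTop_of_one_lt hk)).eventually
      (gt_mem_nhds hε)
  obtain ⟨n, hn⟩ := hsmall.exists
  obtain ⟨x, hx, hfx⟩ := exists_mem_Icc_iterate_eq_of_expanding hf hk.le hfa hexp ht n
  refine ⟨x, ⟨n, hfx⟩, ?_⟩
  rw [Real.dist_eq, abs_sub_comm, abs_of_nonneg (by linarith [hx.1])]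
  linarith [hx.2]

end Expanding

theorem two_mul_sq_sub_pow_four_neg_goldenRatio : 2 * (-φ) ^ 2 - (-φ) ^ 4 = -φ := by
  linear_combination (-(φ ^ 2) - φ) * goldenRatio_sq

theorem neg_goldenRatio_add_four_mul_le {d : ℝ} (hd : d ∈ Icc (0 : ℝ) (1 / 3)) :
    -φ + 4 * d ≤ 2 * (-φ + d) ^ 2 - (-φ + d) ^ 4 := by
  obtain ⟨hd0, hd1⟩ := hd
  have hφ := one_lt_goldenRatio
  have hfactor : 0 ≤ 4 * φ - (6 * φ + 4) * d + 4 * φ * d ^ 2 - d ^ 3 := by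
    nlinarith [mul_nonneg (mul_nonneg hd0 hd0) (sub_nonneg.2 hd1), mul_nonneg hd0 hd0]
  nlinarith [mul_nonneg hd0 hfactor, goldenRatio_sq]

theorem neg_sqrt_two_mem_Icc : -√2 ∈ Icc (-φ) (-φ + 1 / 3) := by
  have hφ := one_lt_goldenRatio
  have hφ2 := goldenRatio_lt_two
  have h2 : √2 ^ 2 = 2 := Real.sq_sqrt (by norm_num)
  constructor <;> nlinarith [Real.sqrt_nonneg 2, goldenRatio_sq, goldenRatio_pos]

/-- Let `f x = 2x² - x⁴`. For every `ε > 0` there are `n ≥ 1` and a real `x`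
with `f^[n] x = 0` and `|x + (1 + √5)/2| < ε`: the closure of the real roots
of the iterates of `f` contains the negative of the golden ratio. -/
theorem iterated_C4_roots_approach_neg_golden_ratio :
    ∀ ε : ℝ, 0 < ε → ∃ n : ℕ, 0 < n ∧ ∃ x : ℝ,
      (fun y : ℝ => 2 * y ^ 2 - y ^ 4)^[n] x = 0 ∧
      |x + (1 + Real.sqrt 5) / 2| < ε := by
  intro ε hε
  have hclosure : -φ ∈ closure {x | ∃ n, (fun y : ℝ => 2 * y ^ 2 - y ^ 4)^[n] x = -√2} :=
    mem_closure_iterate_preimage_of_expanding (by fun_prop) (by norm_num : (1 : ℝ) < 4)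
      two_mul_sq_sub_pow_four_neg_goldenRatio (fun _ => neg_goldenRatio_add_four_mul_le)
      neg_sqrt_two_mem_Icc
  obtain ⟨x, ⟨n, hn⟩, hx⟩ := Metric.mem_closure_iff.1 hclosure ε hε
  refine ⟨n + 1, n.succ_pos, x, ?_, ?_⟩
  · rw [Function.iterate_succ_apply', hn]
    norm_num [show √2 ^ 4 = (√2 ^ 2) ^ 2 by ring]
  · rwa [Real.dist_eq, abs_sub_comm, sub_neg_eq_add] at hx
end

section
/- The closure of the set S = { w ∈ ℂ : there exist positive integers l and k with (1 - w^l)^k = 1 } contains the closed unit disk { z ∈ ℂ : |z| ≤ 1 } centered at 0. Equivalently, for every z ∈ ℂ with |z| ≤ 1 and every ε > 0 there exist positive integers l, k and w ∈ ℂ with (1 - w^l)^k = 1 and |w - z| < ε. -/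
/-!
A solution `w` of `(1 - w ^ l) ^ k = 1` is an `l`-th root of `1 - ζ` for a `k`-th root of
unity `ζ`. Given `0 < ‖z‖ ≤ 1` and `l`, choose `ζ` with `‖1 - ζ‖` between `‖z‖ ^ l / 2` and
`‖z‖ ^ l`. Then `1 - ζ` has an `l`-th root whose modulus is within `‖z‖ / l` of `‖z‖`
(Bernoulli's inequality) and whose argument is within `π / l` of `arg z`, hence it lies within
`(1 + π) ‖z‖ / l` of `z`.
-/

open Complex Real

theorem norm_ofReal_mul_exp_mul_I_sub_le (ρ r α β : ℝ) (hr : 0 ≤ r) :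
    ‖ρ * exp (β * I) - r * exp (α * I)‖ ≤ |ρ - r| + r * |β - α| := by
  have hrot : exp (β * I) - exp (α * I) = exp (α * I) * (exp (I * ↑(β - α)) - 1) := by
    rw [mul_sub, mul_one, ← Complex.exp_add]; push_cast; ring_nf
  have hangle : ‖exp (β * I) - exp (α * I)‖ ≤ |β - α| := by
    rw [hrot, norm_mul, norm_exp_ofReal_mul_I, one_mul, ← Real.norm_eq_abs]
    exact Real.norm_exp_I_mul_ofReal_sub_one_le
  calc ‖ρ * exp (β * I) - r * exp (α * I)‖
      = ‖((ρ - r : ℝ) : ℂ) * exp (β * I) + r * (exp (β * I) - exp (α * I))‖ := by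
        push_cast; ring_nf
    _ ≤ |ρ - r| + r * |β - α| := by
        refine (norm_add_le _ _).trans (add_le_add ?_ ?_)
        · rw [norm_mul, norm_exp_ofReal_mul_I, mul_one, norm_real, Real.norm_eq_abs]
        · rw [norm_mul, norm_real, Real.norm_of_nonneg hr]
          exact mul_le_mul_of_nonneg_left hangle hr

theorem exists_int_abs_add_two_pi_mul_div_sub_le (θ α : ℝ) {l : ℕ} (hl : l ≠ 0) :
    ∃ m : ℤ, |(θ + 2 * π * m) / l - α| ≤ π / l := by
  set c := (l * α - θ) / (2 * π)
  refine ⟨round c, ?_⟩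
  have hlR : (0 : ℝ) < l := by positivity
  have hshift : (θ + 2 * π * round c) / l - α = 2 * π * (round c - c) / l := by
    simp only [c]; field_simp; ring
  rw [hshift, abs_div, abs_mul, abs_of_pos Real.two_pi_pos, abs_of_pos hlR, abs_sub_comm]
  have hround := abs_sub_round c
  calc 2 * π * |c - round c| / l ≤ 2 * π * (1 / 2) / l := by gcongr
    _ = π / l := by ring

theorem exists_pow_eq_norm_sub_le (a z : ℂ) {l : ℕ} (hl : l ≠ 0) :
    ∃ w : ℂ, w ^ l = a ∧ ‖w - z‖ ≤ |‖w‖ - ‖z‖| + π * ‖z‖ / l := by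
  obtain ⟨m, hm⟩ := exists_int_abs_add_two_pi_mul_div_sub_le (arg a) (arg z) hl
  set ρ := ‖a‖ ^ (l⁻¹ : ℝ)
  set β := (arg a + 2 * π * m) / l
  have hρ : 0 ≤ ρ := by positivity
  refine ⟨ρ * exp (β * I), ?_, ?_⟩
  · have hβ : (l : ℂ) * (β * I) = arg a * I + m * (2 * π * I) := by
      simp only [β]; push_cast; field_simp
    rw [mul_pow, ← Complex.ofReal_pow, Real.rpow_inv_natCast_pow (norm_nonneg a) hl,
      ← Complex.exp_nat_mul, hβ, Complex.exp_add, exp_int_mul_two_pi_mul_I, mul_one,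
      norm_mul_exp_arg_mul_I]
  · rw [norm_mul, norm_exp_ofReal_mul_I, mul_one, norm_real, Real.norm_of_nonneg hρ]
    conv_lhs => rw [← norm_mul_exp_arg_mul_I z]
    calc _ ≤ |ρ - ‖z‖| + ‖z‖ * |β - arg z| :=
          norm_ofReal_mul_exp_mul_I_sub_le _ _ _ _ (norm_nonneg z)
      _ ≤ |ρ - ‖z‖| + π * ‖z‖ / l := by
        rw [mul_comm π, mul_div_assoc]; gcongr

theorem abs_sub_le_div_of_pow_le_two_mul_pow {ρ r : ℝ} (hρ : 0 ≤ ρ) (hr : 0 ≤ r) {l : ℕ}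
    (hl : l ≠ 0) (hle : ρ ^ l ≤ r ^ l) (hge : r ^ l ≤ 2 * ρ ^ l) : |ρ - r| ≤ r / l := by
  have hlR : (0 : ℝ) < l := by positivity
  have hρr : ρ ≤ r := (pow_le_pow_iff_left₀ hρ hr hl).1 hle
  have hbern : (2 : ℝ) ≤ (1 + 1 / l) ^ l := by
    have := one_add_mul_le_pow (a := 1 / (l : ℝ)) (by linarith [one_div_pos.2 hlR]) l
    rwa [mul_one_div_cancel hlR.ne', one_add_one_eq_two] at this
  have hr_le : r ≤ ρ * (1 + 1 / l) := by
    refine (pow_le_pow_iff_left₀ hr (by positivity) hl).1 ?_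
    rw [mul_pow]
    nlinarith [pow_nonneg hρ l]
  rw [abs_of_nonpos (by linarith), neg_sub]
  have hdiv : ρ / l ≤ r / l := by gcongr
  nlinarith [mul_one_div ρ l]

theorem exists_pow_eq_one_norm_one_sub_mem_Icc {v : ℝ} (hv0 : 0 < v) (hv1 : v ≤ 1) :
    ∃ (k : ℕ) (ζ : ℂ), 0 < k ∧ ζ ^ k = 1 ∧ ‖1 - ζ‖ ∈ Set.Icc (v / 2) v := by
  -- `‖1 - exp (2πi/k)‖ = 2 sin (π/k)` lies in `[4/k, 2π/k]`, and `k = ⌈2π/v⌉` puts this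
  -- interval inside `[v/2, v]` because `8 - 2π > 1 ≥ v`.
  set k := ⌈2 * π / v⌉₊
  have hk_ge : 2 * π / v ≤ k := Nat.le_ceil _
  have hk_lt : (k : ℝ) < 2 * π / v + 1 := Nat.ceil_lt_add_one (by positivity)
  have hk2 : (2 : ℝ) ≤ k := by
    have : 2 * π ≤ 2 * π / v := le_div_self (by positivity) hv0 hv1
    linarith [Real.pi_gt_three]
  have hkR : (0 : ℝ) < k := by linarith
  refine ⟨k, exp (I * ↑(2 * π / k)), by exact_mod_cast hkR, ?_, ?_⟩
  · rw [← Complex.exp_nat_mul]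
    convert exp_int_mul_two_pi_mul_I 1 using 2
    have hk0 : (k : ℂ) ≠ 0 := by exact_mod_cast hkR.ne'
    push_cast; field_simp
  have hx0 : 0 < π / k := by positivity
  have hx1 : π / k ≤ π / 2 := by gcongr
  have hsin_pos : 0 < Real.sin (π / k) :=
    Real.sin_pos_of_pos_of_lt_pi hx0 (by linarith [Real.pi_pos])
  rw [norm_sub_rev, norm_exp_I_mul_ofReal_sub_one, show 2 * π / k / 2 = π / k by ring,
    Real.norm_eq_abs, abs_of_pos (mul_pos two_pos hsin_pos)]
  constructor
  · have hvk : v * k < 8 := by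
      have := mul_lt_mul_of_pos_left hk_lt hv0
      rw [mul_add, mul_div_cancel₀ _ hv0.ne', mul_one] at this
      linarith [Real.pi_lt_d2]
    calc v / 2 ≤ 4 / k := by rw [div_le_div_iff₀ two_pos hkR]; linarith
      _ = 2 * (2 / π * (π / k)) := by field_simp; norm_num
      _ ≤ 2 * Real.sin (π / k) := by gcongr; exact Real.mul_le_sin hx0.le hx1
  · calc 2 * Real.sin (π / k) ≤ 2 * (π / k) := by gcongr; exact Real.sin_le hx0.le
      _ ≤ v := by
        rw [← mul_div_assoc, div_le_iff₀ hkR]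
        rw [div_le_iff₀ hv0] at hk_ge
        linarith

theorem exists_theta_root_norm_sub_le {z : ℂ} (hz0 : z ≠ 0) (hz1 : ‖z‖ ≤ 1) {l : ℕ}
    (hl : l ≠ 0) : ∃ (k : ℕ) (w : ℂ), 0 < k ∧ (1 - w ^ l) ^ k = 1 ∧
      ‖w - z‖ ≤ (1 + π) * ‖z‖ / l := by
  have hr : 0 < ‖z‖ := norm_pos_iff.2 hz0
  obtain ⟨k, ζ, hk, hζk, hζ_ge, hζ_le⟩ :=
    exists_pow_eq_one_norm_one_sub_mem_Icc (pow_pos hr l) (pow_le_one₀ hr.le hz1)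
  obtain ⟨w, hwl, hwz⟩ := exists_pow_eq_norm_sub_le (1 - ζ) z hl
  have hw_pow : ‖w‖ ^ l = ‖1 - ζ‖ := by rw [← norm_pow, hwl]
  have hradial : |‖w‖ - ‖z‖| ≤ ‖z‖ / l :=
    abs_sub_le_div_of_pow_le_two_mul_pow (norm_nonneg w) hr.le hl (hw_pow ▸ hζ_le)
      (by rw [hw_pow]; linarith)
  refine ⟨k, w, hk, by rw [hwl, sub_sub_cancel, hζk], ?_⟩
  calc ‖w - z‖ ≤ ‖z‖ / l + π * ‖z‖ / l := hwz.trans (by gcongr)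
    _ = (1 + π) * ‖z‖ / l := by ring

/-- The closure of the set of roots of the polynomials `1 - (1 - w^l)^k`
(the two-terminal reliabilities of generalized theta graphs) contains the
closed unit disk centered at `0`. -/
theorem theta_roots_closure_contains_unit_disk_at_zero :
    ∀ z : ℂ, ‖z‖ ≤ 1 → ∀ ε : ℝ, 0 < ε →
      ∃ (l k : ℕ) (w : ℂ), 0 < l ∧ 0 < k ∧ (1 - w ^ l) ^ k = 1 ∧
        ‖w - z‖ < ε := by
  intro z hz ε hε
  rcases eq_or_ne z 0 with rfl | hz0
  · exact ⟨1, 1, 0, one_pos, one_pos, by norm_num, by simpa using hε⟩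
  obtain ⟨l, hl⟩ := exists_nat_gt ((1 + π) / ε)
  have hlR : (0 : ℝ) < l := (div_pos (by positivity) hε).trans hl
  have hl0 : 0 < l := Nat.cast_pos.1 hlR
  obtain ⟨k, w, hk, hroot, hwz⟩ := exists_theta_root_norm_sub_le hz0 hz hl0.ne'
  refine ⟨l, k, w, hl0, hk, hroot, hwz.trans_lt ?_⟩
  calc (1 + π) * ‖z‖ / l ≤ (1 + π) * 1 / l := by gcongr
    _ < ε := by rwa [mul_one, div_lt_iff₀ hlR, ← div_lt_iff₀' hε]
end

section
/- Let n and k be integers with n ≥ 3 and 1 ≤ k ≤ n/2. Then the polynomial g(z) = z^{n-k} - z^{n-2k} - 1 has a root in the open left half-plane: there exists z ∈ ℂ with g(z) = 0 and Re z < 0. -/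
/-!
Write `a = n - k > b = n - 2k`. The real polynomial `x ^ a - x ^ b - 1` is `-1` at `x = 1` and
nonnegative at `x = 2`, so it has a root `r > 1`. By Vieta, the sum of all complex roots is minus
the coefficient of `z ^ (a - 1)`, i.e. `1` or `0`. Hence the roots other than `r` have total real
part `≤ 1 - r < 0`, and one of them lies in the open left half-plane.
-/

open Polynomial

theorem Multiset.exists_re_neg_of_sum_re_lt {s : Multiset ℂ} {x : ℂ} (hx : x ∈ s)
    (h : s.sum.re < x.re) : ∃ z ∈ s, z.re < 0 := by
  by_contra! hs
  have hsum : s.sum = x + (s.erase x).sum := by rw [← Multiset.sum_cons, Multiset.cons_erase hx]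
  have hre : (s.erase x).sum.re = ((s.erase x).map Complex.re).sum :=
    map_multiset_sum Complex.reAddGroupHom _
  have hrest : 0 ≤ ((s.erase x).map Complex.re).sum :=
    Multiset.sum_nonneg fun _ hy ↦ by
      obtain ⟨z, hz, rfl⟩ := Multiset.mem_map.mp hy
      exact hs z (Multiset.mem_of_mem_erase hz)
  rw [hsum, Complex.add_re, hre] at h
  linarith

theorem exists_one_lt_pow_sub_pow_eq_one {a b : ℕ} (hba : b < a) :
    ∃ r : ℝ, 1 < r ∧ r ^ a - r ^ b - 1 = 0 := by
  have h2 : (2 : ℝ) ^ b + 1 ≤ 2 ^ a :=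
    calc (2 : ℝ) ^ b + 1 ≤ 2 ^ b + 2 ^ b := by gcongr; exact one_le_pow₀ one_le_two
      _ = 2 ^ (b + 1) := by ring
      _ ≤ 2 ^ a := pow_le_pow_right₀ one_le_two hba
  obtain ⟨r, ⟨hr1, -⟩, hr⟩ : ∃ r ∈ Set.Icc (1 : ℝ) 2, r ^ a - r ^ b - 1 = 0 :=
    intermediate_value_Icc one_le_two (by fun_prop) ⟨by norm_num, by linarith⟩
  refine ⟨r, lt_of_le_of_ne hr1 ?_, hr⟩
  rintro rfl
  norm_num at hr

section

variable {R : Type*} [CommRing R] [Nontrivial R] {a b : ℕ}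

theorem degree_X_pow_add_one_lt (hba : b < a) : (X ^ b + 1 : R[X]).degree < a := by
  refine (degree_add_le _ _).trans_lt ?_
  simp only [degree_X_pow, degree_one, sup_lt_iff]
  exact ⟨by exact_mod_cast hba, by exact_mod_cast hba.pos⟩

theorem monic_X_pow_sub_X_pow_sub_one (hba : b < a) : (X ^ a - X ^ b - 1 : R[X]).Monic := by
  rw [sub_sub]
  exact monic_X_pow_sub (degree_X_pow_add_one_lt hba)

theorem natDegree_X_pow_sub_X_pow_sub_one (hba : b < a) :
    (X ^ a - X ^ b - 1 : R[X]).natDegree = a := by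
  rw [sub_sub]
  refine natDegree_eq_of_degree_eq_some ?_
  rw [degree_sub_eq_left_of_degree_lt, degree_X_pow]
  simpa only [degree_X_pow] using degree_X_pow_add_one_lt hba

theorem nextCoeff_X_pow_sub_X_pow_sub_one (hba : b < a) (ha : 2 ≤ a) :
    (X ^ a - X ^ b - 1 : R[X]).nextCoeff = if b + 1 = a then -1 else 0 := by
  have hdeg := natDegree_X_pow_sub_X_pow_sub_one (R := R) hba
  rw [nextCoeff_of_natDegree_pos (hdeg.symm ▸ hba.pos), hdeg]
  simp only [coeff_sub, coeff_X_pow, coeff_one]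
  split_ifs <;> first | omega | simp

end

theorem sum_roots_X_pow_sub_X_pow_sub_one {K : Type*} [Field K] [IsAlgClosed K] {a b : ℕ}
    (hba : b < a) (ha : 2 ≤ a) :
    (X ^ a - X ^ b - 1 : K[X]).roots.sum = if b + 1 = a then 1 else 0 := by
  have hvieta := (IsAlgClosed.splits (X ^ a - X ^ b - 1 : K[X])).nextCoeff_eq_neg_sum_roots_of_monic
    (monic_X_pow_sub_X_pow_sub_one hba)
  rw [nextCoeff_X_pow_sub_X_pow_sub_one hba ha] at hvieta
  split_ifs at hvieta ⊢ <;> linear_combination hvieta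

/-- For integers `n ≥ 3` and `1 ≤ k ≤ n/2`, the polynomial
`z^(n-k) - z^(n-2k) - 1` has a root in the open left half-plane. -/
theorem cycle_factor_root_in_left_half_plane (n k : ℕ) (hn : 3 ≤ n)
    (hk : 1 ≤ k) (hkn : 2 * k ≤ n) :
    ∃ z : ℂ, z ^ (n - k) - z ^ (n - 2 * k) - 1 = 0 ∧ z.re < 0 := by
  have hba : n - 2 * k < n - k := by omega
  obtain ⟨r, hr1, hr⟩ := exists_one_lt_pow_sub_pow_eq_one hba
  have hP := (monic_X_pow_sub_X_pow_sub_one (R := ℂ) hba).ne_zero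
  have hroot : ∀ z : ℂ, z ∈ (X ^ (n - k) - X ^ (n - 2 * k) - 1 : ℂ[X]).roots ↔
      z ^ (n - k) - z ^ (n - 2 * k) - 1 = 0 := by
    simp [mem_roots hP]
  have hsum := sum_roots_X_pow_sub_X_pow_sub_one (K := ℂ) hba (by omega)
  have hr_root : (r : ℂ) ∈ (X ^ (n - k) - X ^ (n - 2 * k) - 1 : ℂ[X]).roots :=
    (hroot r).mpr (by exact_mod_cast hr)
  obtain ⟨z, hz, hzre⟩ := Multiset.exists_re_neg_of_sum_re_lt hr_root <| by
    rw [hsum]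
    split_ifs <;> simp <;> linarith
  exact ⟨z, (hroot z).mp hz, hzre⟩
end

section
/- Let n and k be integers with n ≥ 3 and 1 ≤ k ≤ n/2. Then the polynomial P(z) = z^k + z^{n-k} - z^n has a root z ∈ ℂ with |z - 1| > 1. Consequently, no subdivision of a cycle of order at least 3 has all of its two-terminal reliability roots in the closed unit disk centered at 1. -/
/-!
Inversion `z ↦ z⁻¹` maps the punctured disk `0 < |z| ∧ |z - 1| ≤ 1` onto the half-plane
`Re w ≥ 1/2`, and it maps the nonzero roots of `z^k + z^(n-k) - z^n` onto the roots of the reversed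
polynomial `w^(n-k) + w^k - 1`. If every root of the former lay in the disk, all `n - k ≥ 2` roots
of the latter would have positive real part, so their sum would too. But by Vieta that sum is
`-coeff(n-k-1) / leadingCoeff`, which is `0` or `-1`.
-/

open Polynomial

theorem Complex.one_half_le_re_of_norm_inv_sub_one_le {w : ℂ} (hw : w ≠ 0)
    (h : ‖w⁻¹ - 1‖ ≤ 1) : 1 / 2 ≤ w.re := by
  have hnorm : ‖1 - w‖ ≤ ‖w‖ := by
    rwa [← div_le_one (norm_pos_iff.mpr hw), ← norm_div, sub_div, div_self hw, one_div]
  have hsq : normSq (1 - w) ≤ normSq w := by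
    rw [← Complex.sq_norm, ← Complex.sq_norm]
    exact pow_le_pow_left₀ (norm_nonneg _) hnorm 2
  simp only [normSq_apply, sub_re, sub_im, one_re, one_im] at hsq
  nlinarith

theorem Polynomial.re_nextCoeff_div_leadingCoeff_neg {p : ℂ[X]} (hp : 0 < p.natDegree)
    (hroots : ∀ w ∈ p.roots, 0 < w.re) : (p.nextCoeff / p.leadingCoeff).re < 0 := by
  have hlc : p.leadingCoeff ≠ 0 := leadingCoeff_ne_zero.mpr (ne_zero_of_natDegree_gt hp)
  have hne : p.roots ≠ 0 := by
    rw [← Multiset.card_pos, IsAlgClosed.card_roots_eq_natDegree]; exact hp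
  have hsum : 0 < (p.roots.map Complex.re).sum := by
    simpa using Multiset.sum_lt_sum_of_nonempty hne (f := fun _ => (0 : ℝ)) hroots
  rw [(IsAlgClosed.splits p).nextCoeff_eq_neg_sum_roots_mul_leadingCoeff, neg_mul,
    neg_div, mul_div_cancel_left₀ _ hlc, Complex.neg_re, neg_neg_iff_pos]
  simpa [← Complex.coe_reAddGroupHom, map_multiset_sum] using hsum

theorem inv_pow_add_inv_pow_sub_inv_pow {K : Type*} [Field K] {w : K} (hw : w ≠ 0) {n k : ℕ}
    (hkn : k ≤ n) :
    w⁻¹ ^ k + w⁻¹ ^ (n - k) - w⁻¹ ^ n = (w ^ (n - k) + w ^ k - 1) / w ^ n := by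
  obtain ⟨j, rfl⟩ := Nat.exists_eq_add_of_le hkn
  rw [Nat.add_sub_cancel_left]
  simp only [inv_pow]
  field_simp
  ring

theorem Polynomial.natDegree_X_pow_add_X_pow_sub_one {R : Type*} [Ring R] [CharZero R]
    {d k : ℕ} (hk : k ≤ d) (hd : 0 < d) :
    (X ^ d + X ^ k - 1 : R[X]).natDegree = d := by
  apply natDegree_eq_of_le_of_coeff_ne_zero
  · compute_degree
    exact max_le le_rfl hk
  · simp only [coeff_add, coeff_sub, coeff_X_pow_self, coeff_X_pow, coeff_one, hd.ne',
      if_false, sub_zero]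
    split_ifs <;> norm_num

theorem Polynomial.re_nextCoeff_div_leadingCoeff_X_pow_add_X_pow_sub_one_nonneg
    {d k : ℕ} (hk : k ≤ d) (hd : 2 ≤ d) :
    0 ≤ ((X ^ d + X ^ k - 1 : ℂ[X]).nextCoeff / (X ^ d + X ^ k - 1 : ℂ[X]).leadingCoeff).re := by
  have hdeg := natDegree_X_pow_add_X_pow_sub_one (R := ℂ) hk (by omega)
  rw [nextCoeff_of_natDegree_pos (by omega), leadingCoeff, hdeg]
  simp only [coeff_add, coeff_sub, coeff_X_pow, coeff_one]
  split_ifs <;> norm_num <;> omega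

/-- For integers `n ≥ 3` and `1 ≤ k ≤ n/2`, the polynomial
`z^k + z^(n-k) - z^n` has a root `z` with `|z - 1| > 1`. Consequently, no
subdivision of a cycle of order at least `3` has all of its two-terminal
reliability roots in the closed unit disk centered at `1`. -/
theorem cycle_two_terminal_root_outside_disk (n k : ℕ) (hn : 3 ≤ n)
    (hk : 1 ≤ k) (hkn : 2 * k ≤ n) :
    ∃ z : ℂ, z ^ k + z ^ (n - k) - z ^ n = 0 ∧ 1 < ‖z - 1‖ := by
  by_contra! hdisk
  set R : ℂ[X] := X ^ (n - k) + X ^ k - 1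
  have hroots : ∀ w ∈ R.roots, 0 < w.re := by
    intro w hw
    have hRw : w ^ (n - k) + w ^ k - 1 = 0 := by simpa [R] using isRoot_of_mem_roots hw
    have hw0 : w ≠ 0 := by
      rintro rfl
      simp [zero_pow (by omega : n - k ≠ 0), zero_pow (by omega : k ≠ 0)] at hRw
    have hinv := hdisk w⁻¹ (by rw [inv_pow_add_inv_pow_sub_inv_pow hw0 (by omega), hRw, zero_div])
    linarith [Complex.one_half_le_re_of_norm_inv_sub_one_le hw0 hinv]
  have hdeg : 0 < R.natDegree := by
    rw [natDegree_X_pow_add_X_pow_sub_one (by omega) (by omega)]; omega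
  exact (re_nextCoeff_div_leadingCoeff_neg hdeg hroots).not_ge
    (re_nextCoeff_div_leadingCoeff_X_pow_add_X_pow_sub_one_nonneg (by omega) (by omega))
end

section
/- Let f : ℂ → ℂ be given by f(z) = z + z² - z³. Then every critical point of f has bounded forward orbit: for every z ∈ ℂ with f'(z) = 1 + 2z - 3z² = 0, the set { f^[n](z) : n ∈ ℕ } is a bounded subset of ℂ. -/
/-!
The critical points are `1` and `-1/3`. The first is fixed by `f`. The second is real, and
`f` maps `[-1/3, 0]` into itself since `f x - x = x² (1 - x) ≥ 0` and
`f x = x (1 + x - x²) ≤ 0` there, so the orbit of `-1/3` stays in that interval.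
-/

open Set Function

theorem eq_one_or_eq_neg_third_of_critical {K : Type*} [Field K] [NeZero (3 : K)] {z : K}
    (hz : 1 + 2 * z - 3 * z ^ 2 = 0) : z = 1 ∨ z = -(1 / 3) := by
  have h3 : (3 : K) ≠ 0 := NeZero.ne 3
  have hfactor : (z - 1) * (3 * z + 1) = 0 := by linear_combination -hz
  rcases mul_eq_zero.mp hfactor with h | h
  · exact .inl (by linear_combination h)
  · exact .inr (by field_simp; linear_combination h)

theorem mapsTo_Icc_neg_third_zero :
    MapsTo (fun x : ℝ => x + x ^ 2 - x ^ 3) (Icc (-(1 / 3)) 0) (Icc (-(1 / 3)) 0) := by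
  rintro x ⟨hlo, hhi⟩
  constructor <;> nlinarith [sq_nonneg x, mul_nonneg (neg_nonneg.mpr hhi) (sq_nonneg x)]

theorem iterate_ofReal (n : ℕ) (x : ℝ) :
    (fun w : ℂ => w + w ^ 2 - w ^ 3)^[n] (x : ℂ) = ((fun y : ℝ => y + y ^ 2 - y ^ 3)^[n] x : ℝ) :=
  (Semiconj.iterate_right (fun y : ℝ => by push_cast; rfl) n x).symm

/-- Every critical point of `f z = z + z² - z³` (the two-terminal reliability
of the triangle with adjacent terminals) has a bounded forward orbit. -/
theorem C3_critical_orbits_bounded :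
    ∀ z : ℂ, 1 + 2 * z - 3 * z ^ 2 = 0 →
      Bornology.IsBounded
        (Set.range fun n : ℕ => (fun w : ℂ => w + w ^ 2 - w ^ 3)^[n] z) := by
  intro z hz
  rcases eq_one_or_eq_neg_third_of_critical hz with rfl | rfl
  · have hfixed : IsFixedPt (fun w : ℂ => w + w ^ 2 - w ^ 3) 1 := by norm_num [IsFixedPt]
    exact Bornology.isBounded_singleton.subset
      (range_subset_singleton.mpr (funext fun n => (hfixed.iterate n).eq))
  · refine ((isCompact_Icc (a := -(1 / 3 : ℝ)) (b := 0)).image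
      Complex.continuous_ofReal).isBounded.subset ?_
    rintro _ ⟨n, rfl⟩
    refine ⟨_, mapsTo_Icc_neg_third_zero.iterate n ⟨le_rfl, by norm_num⟩, ?_⟩
    simpa using (iterate_ofReal n (-(1 / 3))).symm
end

section
/- Let f : ℂ → ℂ be given by f(z) = z + z³ - z⁴. Then every critical point of f has bounded forward orbit: for every z ∈ ℂ with f'(z) = 1 + 3z² - 4z³ = 0, the set { f^[n](z) : n ∈ ℕ } is a bounded subset of ℂ. -/
/-!
Besides the fixed point `1`, the critical points of `f z = z + z³ - z⁴` are the roots of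
`4z² + z + 1`, and they are attracted to the parabolic fixed point `0`. Writing `f w = w (1 + u)`
with `u = w²(1 - w)`, one has `f(w)⁻² = w⁻² + (w - 1)(2 + u)/(1 + u)²`, and the correction term has
nonpositive real part as soon as `‖w‖ ≤ 1/3`. Hence the petal `{w | Re w⁻² ≤ -9}`, which lies in the
disk of radius `1/3`, is `f`-invariant; the second iterate of either nonreal critical point lies
in it (there `Re w⁻² ≈ -10.24`).
-/

open Complex Function Set Metric

def c4Reliability (w : ℂ) : ℂ := w + w ^ 3 - w ^ 4

def c4Petal : Set ℂ := {w | ((w ^ 2)⁻¹).re ≤ -9}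

theorem Bornology.IsBounded.range_iterate {α : Type*} [Bornology α] {f : α → α} {s : Set α}
    (hs : Bornology.IsBounded s) (hf : MapsTo f s s) {x : α} {k : ℕ} (hk : f^[k] x ∈ s) :
    Bornology.IsBounded (range fun n ↦ f^[n] x) := by
  refine (((finite_Iio k).image fun n ↦ f^[n] x).isBounded.union hs).subset ?_
  rintro _ ⟨n, rfl⟩
  rcases lt_or_ge n k with hn | hn
  · exact Or.inl ⟨n, hn, rfl⟩
  · obtain ⟨m, rfl⟩ := Nat.exists_eq_add_of_le' hn
    exact Or.inr (by simpa only [iterate_add_apply] using hf.iterate m hk)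

theorem norm_le_inv_of_re_inv_le_neg {T : ℝ} (hT : 0 < T) {x : ℂ} (h : (x⁻¹).re ≤ -T) :
    ‖x‖ ≤ T⁻¹ := by
  have hT_le : T ≤ ‖x‖⁻¹ := by
    rw [← norm_inv]
    linarith [abs_le.mp (abs_re_le_norm x⁻¹)]
  have hx : 0 < ‖x‖ := by
    by_contra! hx
    rw [le_antisymm hx (norm_nonneg x), inv_zero] at hT_le
    linarith
  exact (le_inv_comm₀ hT hx).mp hT_le

theorem c4Petal_subset_closedBall : c4Petal ⊆ closedBall 0 (1 / 3) := by
  intro w hw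
  have hw2 : ‖w‖ ^ 2 ≤ 9⁻¹ := by
    simpa only [norm_pow] using norm_le_inv_of_re_inv_le_neg (by norm_num) hw
  rw [mem_closedBall, dist_zero_right]
  nlinarith [norm_nonneg w]

theorem inv_sq_c4Reliability {w : ℂ} (hw : w ≠ 0) (hu : 1 + w ^ 2 * (1 - w) ≠ 0) :
    (c4Reliability w ^ 2)⁻¹ =
      (w ^ 2)⁻¹ + (w - 1) * ((2 + w ^ 2 * (1 - w)) / (1 + w ^ 2 * (1 - w)) ^ 2) := by
  unfold c4Reliability
  have hf : w + w ^ 3 - w ^ 4 = w * (1 + w ^ 2 * (1 - w)) := by ring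
  rw [hf]
  field_simp
  ring

theorem norm_two_add_div_one_add_sq_sub_two_le {u : ℂ} (hu : ‖u‖ ≤ 4 / 27) :
    ‖(2 + u) / (1 + u) ^ 2 - 2‖ ≤ 1 := by
  have h1u : 23 / 27 ≤ ‖1 + u‖ := by
    have := norm_sub_norm_le (1 : ℂ) (-u)
    rw [norm_one, norm_neg, sub_neg_eq_add] at this
    linarith
  have hne : 1 + u ≠ 0 := norm_pos_iff.mp (by linarith)
  have hnum : ‖3 + 2 * u‖ ≤ 3 + 2 * ‖u‖ := by
    refine (norm_add_le _ _).trans ?_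
    rw [norm_mul]
    norm_num
  have hsq : (23 / 27) ^ 2 ≤ ‖1 + u‖ ^ 2 := by gcongr
  have hid : (2 + u) / (1 + u) ^ 2 - 2 = -(u * (3 + 2 * u)) / (1 + u) ^ 2 := by
    field_simp
    ring
  rw [hid, norm_div, norm_neg, norm_mul, norm_pow, div_le_one (by positivity)]
  nlinarith [norm_nonneg u, norm_nonneg (3 + 2 * u)]

theorem re_sub_one_mul_nonpos {w q : ℂ} (hw : ‖w‖ ≤ 1 / 3) (hq : ‖q - 2‖ ≤ 1) :
    ((w - 1) * q).re ≤ 0 := by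
  have hsplit : (w - 1) * q = 2 * (w - 1) + (w - 1) * (q - 2) := by ring
  have hre : ((w - 1) * (q - 2)).re ≤ ‖w - 1‖ * ‖q - 2‖ := by
    simpa only [norm_mul] using re_le_norm ((w - 1) * (q - 2))
  have hw1 : ‖w - 1‖ ≤ ‖w‖ + 1 := by simpa using norm_sub_le w 1
  have hwre : w.re ≤ ‖w‖ := re_le_norm w
  rw [hsplit, add_re, mul_re, re_ofNat, im_ofNat, zero_mul, sub_zero, sub_re, one_re]
  nlinarith [norm_nonneg (w - 1), norm_nonneg (q - 2)]

theorem re_inv_sq_c4Reliability_le {w : ℂ} (hw : ‖w‖ ≤ 1 / 3) :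
    ((c4Reliability w ^ 2)⁻¹).re ≤ ((w ^ 2)⁻¹).re := by
  rcases eq_or_ne w 0 with rfl | hw0
  · simp [c4Reliability]
  have hu : ‖w ^ 2 * (1 - w)‖ ≤ 4 / 27 := by
    have h1w : ‖1 - w‖ ≤ 1 + ‖w‖ := by simpa using norm_sub_le 1 w
    rw [norm_mul, norm_pow]
    calc ‖w‖ ^ 2 * ‖1 - w‖ ≤ (1 / 3) ^ 2 * (1 + 1 / 3) := by gcongr; linarith
      _ = 4 / 27 := by norm_num
  have hu0 : 1 + w ^ 2 * (1 - w) ≠ 0 := by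
    intro h
    rw [show w ^ 2 * (1 - w) = -1 by linear_combination h, norm_neg, norm_one] at hu
    norm_num at hu
  rw [inv_sq_c4Reliability hw0 hu0, add_re]
  linarith [re_sub_one_mul_nonpos hw (norm_two_add_div_one_add_sq_sub_two_le hu)]

theorem mapsTo_c4Petal : MapsTo c4Reliability c4Petal c4Petal := fun _ hw ↦
  (re_inv_sq_c4Reliability_le (mem_closedBall_zero_iff.mp (c4Petal_subset_closedBall hw))).trans hw

theorem re_im_of_four_mul_sq_add_add_one_eq_zero {z : ℂ} (h : 4 * z ^ 2 + z + 1 = 0) :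
    z.re = -1 / 8 ∧ z.im ^ 2 = 15 / 64 := by
  have hre := congrArg re h
  have him := congrArg im h
  simp only [add_re, add_im, mul_re, mul_im, re_ofNat, im_ofNat, one_re, one_im, zero_re, zero_im,
    pow_two] at hre him
  have him0 : z.im ≠ 0 := by
    intro h0
    rw [h0] at hre
    nlinarith [sq_nonneg (8 * z.re + 1)]
  have hx : z.re = -1 / 8 := by
    have : z.im * (8 * z.re + 1) = 0 := by linear_combination him
    linarith [(mul_eq_zero.mp this).resolve_left him0]
  refine ⟨hx, ?_⟩
  rw [hx] at hre
  linear_combination -hre / 4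

theorem re_inv_sq (w : ℂ) :
    ((w ^ 2)⁻¹).re = (w.re ^ 2 - w.im ^ 2) / (w.re ^ 2 + w.im ^ 2) ^ 2 := by
  rw [inv_re, map_pow, normSq_apply, pow_two w, mul_re]
  ring

theorem c4Reliability_iterate_two_of_quadratic {z : ℂ} (hz : 4 * z ^ 2 + z + 1 = 0) :
    c4Reliability^[2] z =
      ((20322973 / 2 ^ 30 : ℝ) : ℂ) + ((655175385 / 2 ^ 30 : ℝ) : ℂ) * z := by
  have h1 : c4Reliability z = 1 / 64 + 45 / 64 * z := by
    unfold c4Reliability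
    linear_combination (-1 / 64 + 5 / 16 * z - 1 / 4 * z ^ 2) * hz
  rw [iterate_succ_apply', iterate_one, h1, c4Reliability]
  push_cast
  linear_combination
    (-3541725 / 2 ^ 30 + 25970625 / 2 ^ 28 * z - 4100625 / 2 ^ 26 * z ^ 2) * hz

theorem c4Reliability_iterate_two_mem_c4Petal {z : ℂ} (hz : 4 * z ^ 2 + z + 1 = 0) :
    c4Reliability^[2] z ∈ c4Petal := by
  obtain ⟨hre, him⟩ := re_im_of_four_mul_sq_add_add_one_eq_zero hz
  have hwre (a b : ℝ) : ((a : ℂ) + b * z).re = a - b / 8 := by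
    simp only [add_re, mul_re, ofReal_re, ofReal_im, zero_mul, sub_zero, hre]
    ring
  have hwim (a b : ℝ) : ((a : ℂ) + b * z).im ^ 2 = b ^ 2 * (15 / 64) := by
    simp only [add_im, mul_im, ofReal_re, ofReal_im, zero_mul, add_zero, zero_add, mul_pow, him]
  show ((c4Reliability^[2] z ^ 2)⁻¹).re ≤ -9
  rw [c4Reliability_iterate_two_of_quadratic hz, re_inv_sq, hwre, hwim]
  norm_num

/-- Every critical point of `f z = z + z³ - z⁴` (the two-terminal reliability
of the 4-cycle with adjacent terminals) has a bounded forward orbit. -/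
theorem C4_adjacent_critical_orbits_bounded :
    ∀ z : ℂ, 1 + 3 * z ^ 2 - 4 * z ^ 3 = 0 →
      Bornology.IsBounded
        (Set.range fun n : ℕ => (fun w : ℂ => w + w ^ 3 - w ^ 4)^[n] z) := by
  intro z hz
  change Bornology.IsBounded (range fun n ↦ c4Reliability^[n] z)
  have hfac : (z - 1) * (4 * z ^ 2 + z + 1) = 0 := by linear_combination -hz
  rcases mul_eq_zero.mp hfac with hfixed | hquad
  · rw [sub_eq_zero.mp hfixed]
    exact Bornology.isBounded_singleton.range_iterate
      (mapsTo_singleton.mpr (by norm_num [c4Reliability])) (k := 0) rfl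
  · exact (isBounded_closedBall.subset c4Petal_subset_closedBall).range_iterate mapsTo_c4Petal
      (c4Reliability_iterate_two_mem_c4Petal hquad)
end

section
/- Let k be a positive integer and let f : ℂ → ℂ be given by f(z) = 2z^k - z^{2k}. Then every critical point of f has bounded forward orbit: for every z ∈ ℂ with f'(z) = 2k z^{k-1}(1 - z^k) = 0, the set { f^[n](z) : n ∈ ℕ } is a bounded subset of ℂ. -/
/-!
Completing the square, `2 w^k - w^(2k) = 1 - (1 - w^k)^2`, so `f` sends every `k`-th root of
unity to the fixed point `1`, while the other critical point `0` is itself fixed. Hence every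
critical orbit stays in the finite set `{z, 0, 1}`.
-/

open Set Function

theorem range_iterate_subset_insert_of_mapsTo {α : Type*} {f : α → α} {s : Set α}
    (hs : MapsTo f s s) {x : α} (hx : f x ∈ s) :
    range (fun n => f^[n] x) ⊆ insert x s := by
  rintro _ ⟨_ | n, rfl⟩
  · exact mem_insert x s
  · show f^[n + 1] x ∈ insert x s
    rw [iterate_succ_apply]
    exact mem_insert_of_mem x (hs.iterate n hx)

section CycleReliability

variable {R : Type*} [CommRing R] (k : ℕ)

theorem two_mul_pow_sub_pow_two_mul_eq (w : R) :
    2 * w ^ k - w ^ (2 * k) = 1 - (1 - w ^ k) ^ 2 := by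
  ring

theorem two_mul_pow_sub_pow_two_mul_of_pow_eq_one {w : R} (hw : w ^ k = 1) :
    2 * w ^ k - w ^ (2 * k) = 1 := by
  rw [two_mul_pow_sub_pow_two_mul_eq, hw]
  ring

theorem mapsTo_two_mul_pow_sub_pow_two_mul {k : ℕ} (hk : k ≠ 0) :
    MapsTo (fun w : R => 2 * w ^ k - w ^ (2 * k)) {0, 1} {0, 1} := by
  rintro w (rfl | rfl)
  · left
    simp [zero_pow hk, zero_pow (mul_ne_zero two_ne_zero hk)]
  · right
    exact two_mul_pow_sub_pow_two_mul_of_pow_eq_one k (one_pow k)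

end CycleReliability

theorem eq_zero_or_pow_eq_one_of_critical {K : Type*} [Field K] [CharZero K] {k : ℕ} (hk : 0 < k)
    {z : K} (hz : 2 * k * z ^ (k - 1) * (1 - z ^ k) = 0) : z = 0 ∨ z ^ k = 1 := by
  rcases mul_eq_zero.mp hz with hz | hz
  · have hpow : z ^ (k - 1) = 0 := by simpa [hk.ne'] using hz
    rcases Nat.lt_or_ge 1 k with hk1 | hk1
    · exact Or.inl (pow_eq_zero_iff (by omega) |>.mp hpow)
    · simp [show k - 1 = 0 by omega] at hpow
  · exact Or.inr (sub_eq_zero.mp hz).symm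

/-- For every positive integer `k`, every critical point of
`f z = 2z^k - z^(2k)` (the two-terminal reliability of the even cycle
`C_{2k}` with antipodal terminals) has a bounded forward orbit. -/
theorem even_cycle_antipodal_critical_orbits_bounded (k : ℕ) (hk : 0 < k) :
    ∀ z : ℂ, 2 * k * z ^ (k - 1) * (1 - z ^ k) = 0 →
      Bornology.IsBounded
        (Set.range fun n : ℕ =>
          (fun w : ℂ => 2 * w ^ k - w ^ (2 * k))^[n] z) := by
  intro z hz
  have hfz : 2 * z ^ k - z ^ (2 * k) ∈ ({0, 1} : Set ℂ) := by
    rcases eq_zero_or_pow_eq_one_of_critical hk hz with rfl | hz1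
    · exact mapsTo_two_mul_pow_sub_pow_two_mul hk.ne' (mem_insert 0 _)
    · exact Or.inr (two_mul_pow_sub_pow_two_mul_of_pow_eq_one k hz1)
  have hfinite : (insert z {0, 1} : Set ℂ).Finite := toFinite _
  exact (hfinite.subset <| range_iterate_subset_insert_of_mapsTo
    (mapsTo_two_mul_pow_sub_pow_two_mul hk.ne') hfz).isBounded
end

section
/- Let f : ℂ → ℂ be given by f(z) = z⁶ - z⁵ - 2z⁴ + 2z³ + z. Then there exists a real number r with -1.2 < r < -1.1 such that f'(r) = 0 and the forward orbit { f^[n](r) : n ∈ ℕ } is an unbounded subset of ℂ. In particular, f has a critical point with unbounded forward orbit. -/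
/-!
For `|z| ≥ 3` the leading term dominates: `|f z| ≥ |z| + 1`, so once an orbit leaves the disc of
radius `3` its modulus grows at least linearly. The critical point `r` itself lies in that disc, but
`f ≤ -3` on the whole interval `[-1.2, -1.1]`, so already `f r` is outside it.
-/

open Bornology Set

theorem not_isBounded_range_iterate_of_norm_add_one_le {E : Type*} [SeminormedAddGroup E]
    {f : E → E} {R : ℝ} (hf : ∀ z, R ≤ ‖z‖ → ‖z‖ + 1 ≤ ‖f z‖) {z : E} (hz : R ≤ ‖z‖) :
    ¬ IsBounded (range fun n : ℕ => f^[n] z) := by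
  have hgrow : ∀ n : ℕ, ‖z‖ + n ≤ ‖f^[n] z‖ := by
    intro n
    induction n with
    | zero => simp
    | succ n ih =>
      rw [Function.iterate_succ_apply', Nat.cast_succ]
      have hR : R ≤ ‖f^[n] z‖ := by linarith [n.cast_nonneg (α := ℝ)]
      linarith [hf _ hR]
  rw [isBounded_iff_forall_norm_le]
  rintro ⟨C, hC⟩
  obtain ⟨n, hn⟩ := exists_nat_gt (C - ‖z‖)
  linarith [hC _ ⟨n, rfl⟩, hgrow n]

namespace K23

def reliability (z : ℂ) : ℂ := z ^ 6 - z ^ 5 - 2 * z ^ 4 + 2 * z ^ 3 + z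

theorem norm_add_one_le_norm_reliability {z : ℂ} (hz : 3 ≤ ‖z‖) :
    ‖z‖ + 1 ≤ ‖reliability z‖ := by
  set t := ‖z‖
  have hsplit : reliability z = z ^ 6 - (z ^ 5 + 2 * z ^ 4 - 2 * z ^ 3 - z) := by
    unfold reliability; ring
  have hlower : ‖z ^ 5 + 2 * z ^ 4 - 2 * z ^ 3 - z‖ ≤ t ^ 5 + 2 * t ^ 4 + 2 * t ^ 3 + t := by
    calc ‖z ^ 5 + 2 * z ^ 4 - 2 * z ^ 3 - z‖
        ≤ ‖z ^ 5‖ + ‖2 * z ^ 4‖ + ‖2 * z ^ 3‖ + ‖z‖ := by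
          grw [norm_sub_le, norm_sub_le, norm_add_le]
      _ = t ^ 5 + 2 * t ^ 4 + 2 * t ^ 3 + t := by
          simp only [norm_pow, norm_mul, Complex.norm_ofNat, t]
  have hnorm : t ^ 6 - (t ^ 5 + 2 * t ^ 4 + 2 * t ^ 3 + t) ≤ ‖reliability z‖ := by
    rw [hsplit, ← norm_pow]
    linarith [norm_sub_norm_le (z ^ 6) (z ^ 5 + 2 * z ^ 4 - 2 * z ^ 3 - z)]
  nlinarith [pow_le_pow_left₀ (by norm_num) hz 5, sq_nonneg t, sq_nonneg (t - 3)]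

theorem three_le_norm_reliability_ofReal {x : ℝ} (hl : -1.2 ≤ x) (hu : x ≤ -1.1) :
    3 ≤ ‖reliability x‖ := by
  have hle : x ^ 6 - x ^ 5 - 2 * x ^ 4 + 2 * x ^ 3 + x ≤ -3 := by
    nlinarith [sq_nonneg (x + 1.157), sq_nonneg ((x + 1.157) * x), sq_nonneg x,
      sq_nonneg ((x + 1.157) * x ^ 2)]
  have hcast : reliability x = ((x ^ 6 - x ^ 5 - 2 * x ^ 4 + 2 * x ^ 3 + x : ℝ) : ℂ) := by
    unfold reliability; push_cast; ring
  rw [hcast, Complex.norm_real, Real.norm_eq_abs, abs_of_neg (by linarith)]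
  linarith

theorem exists_critical_point :
    ∃ r : ℝ, -1.2 < r ∧ r < -1.1 ∧ 6 * r ^ 5 - 5 * r ^ 4 - 8 * r ^ 3 + 6 * r ^ 2 + 1 = 0 := by
  have hcont : ContinuousOn (fun x : ℝ => 6 * x ^ 5 - 5 * x ^ 4 - 8 * x ^ 3 + 6 * x ^ 2 + 1)
      (Icc (-1.2) (-1.1)) := by
    fun_prop
  obtain ⟨r, ⟨hl, hu⟩, hr⟩ :=
    intermediate_value_Ioo (by norm_num) hcont (by constructor <;> norm_num : (0 : ℝ) ∈ _)
  exact ⟨r, hl, hu, hr⟩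

end K23

open K23 in
/-- There is a real critical point `r ∈ (-1.2, -1.1)` of
`f z = z⁶ - z⁵ - 2z⁴ + 2z³ + z` (i.e. `f'(r) = 6r⁵ - 5r⁴ - 8r³ + 6r² + 1 = 0`)
whose forward orbit under `f` is unbounded. -/
theorem K23_critical_point_unbounded_orbit :
    ∃ r : ℝ, -1.2 < r ∧ r < -1.1 ∧
      6 * r ^ 5 - 5 * r ^ 4 - 8 * r ^ 3 + 6 * r ^ 2 + 1 = 0 ∧
      ¬ Bornology.IsBounded
        (Set.range fun n : ℕ =>
          (fun w : ℂ => w ^ 6 - w ^ 5 - 2 * w ^ 4 + 2 * w ^ 3 + w)^[n]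
            (r : ℂ)) := by
  obtain ⟨r, hl, hu, hcrit⟩ := exists_critical_point
  refine ⟨r, hl, hu, hcrit, fun hbdd => ?_⟩
  have hescape := not_isBounded_range_iterate_of_norm_add_one_le
    (fun z hz => norm_add_one_le_norm_reliability hz)
    (three_le_norm_reliability_ofReal hl.le hu.le)
  exact hescape (hbdd.subset (range_subset_iff.2 fun n =>
    ⟨n + 1, Function.iterate_succ_apply reliability n r⟩))
end
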